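/- (Lemma 1, measure form.) Let ν̃ > 0, s̃ > 0 and β ∈ ℝ. For every Borel measurable set A ⊆ ℝ, ∫₀^∞ (gaussianReal β (1/λ))(A) · ((ν̃ s̃²/2)^{ν̃/2}/Γ(ν̃/2)) · λ^{ν̃/2−1} · exp(−(ν̃ s̃²/2) λ) dλ = ∫_A Γ((ν̃+1)/2)/(Γ(ν̃/2)·√(π ν̃)·s̃) · (1 + (x−β)²/(ν̃ s̃²))^{−(ν̃+1)/2} dx. That is, the mixture of the Gaussian measures with mean β and variance 1/λ, with mixing gamma density of shape ν̃/2 and rate ν̃ s̃²/2 on the precision λ, equals the measure on ℝ with density equal to the generalized Student t density with ν̃ degrees of freedom, location β and scale s̃. -/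

import Mathlib

open Real MeasureTheory Set ProbabilityTheory

/-- Lemma 1 of the paper, measure form: the mixture of the Gaussian measures with
mean `β` and variance `1/λ`, with mixing gamma density of shape `ν̃/2` and rate
`ν̃ s̃²/2` on the precision `λ`, equals the measure on `ℝ` with density equal to the
generalized Student t density with `ν̃` degrees of freedom, location `β`, scale `s̃`. -/
theorem lemma1_measure_form (ν s β : ℝ) (hν : 0 < ν) (hs : 0 < s)
    (A : Set ℝ) (hA : MeasurableSet A) :
    ∫ l in Ioi (0 : ℝ),
        ((gaussianReal β (Real.toNNReal (1 / l))) A).toReal *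
          ((ν * s ^ 2 / 2) ^ (ν / 2) / Real.Gamma (ν / 2) * l ^ (ν / 2 - 1) *
            Real.exp (-(ν * s ^ 2 / 2) * l))
      = ∫ x in A,
          Real.Gamma ((ν + 1) / 2) / (Real.Gamma (ν / 2) * Real.sqrt (π * ν) * s) *
            (1 + (x - β) ^ 2 / (ν * s ^ 2)) ^ (-((ν + 1) / 2)) := by
  have hπ : (0:ℝ) < π := Real.pi_pos
  set r : ℝ := ν * s ^ 2 / 2 with hr_def
  have hr : 0 < r := by positivity
  set a : ℝ := ν / 2 with ha_def
  have ha : 0 < a := by positivity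
  set p : ℝ := (ν + 1) / 2 with hp_def
  have hp : 0 < p := by positivity
  have hGa : 0 < Real.Gamma a := Real.Gamma_pos_of_pos ha
  have hGp : 0 < Real.Gamma p := Real.Gamma_pos_of_pos hp
  set γ : ℝ → ℝ := fun l => r ^ a / Real.Gamma a * l ^ (a - 1) * Real.exp (-r * l) with hγ
  set ψ : ℝ → ℝ → ℝ :=
    fun l x => gaussianPDFReal β (Real.toNNReal (1/l)) x * γ l with hψ
  set D : ℝ → ℝ := fun x => Real.Gamma p / (Real.Gamma a * Real.sqrt (π * ν) * s) *
      (1 + (x - β) ^ 2 / (ν * s ^ 2)) ^ (-p) with hD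
  -- nonnegativity facts
  have hγ_nonneg : ∀ l ∈ Ioi (0:ℝ), 0 ≤ γ l := by
    intro l hl
    have hl' : (0:ℝ) < l := hl
    positivity
  have hψ_nonneg : ∀ l ∈ Ioi (0:ℝ), ∀ x, 0 ≤ ψ l x := by
    intro l hl x
    exact mul_nonneg (gaussianPDFReal_nonneg _ _ _) (hγ_nonneg l hl)
  -- measurability of ψ as a function of the pair
  have hψ_meas : Measurable (fun q : ℝ × ℝ => ψ q.1 q.2) := by
    simp only [hψ, hγ, gaussianPDFReal_def]
    fun_prop
  -- key1: inner lintegral over A for fixed l > 0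
  have key1 : ∀ l ∈ Ioi (0:ℝ),
      ∫⁻ x in A, ENNReal.ofReal (ψ l x)
        = (gaussianReal β (Real.toNNReal (1/l))) A * ENNReal.ofReal (γ l) := by
    intro l hl
    have hl' : (0:ℝ) < l := hl
    have hv : Real.toNNReal (1/l) ≠ 0 := by
      simp [Real.toNNReal_eq_zero, not_le, hl']
    have : ∀ x, ENNReal.ofReal (ψ l x)
        = ENNReal.ofReal (gaussianPDFReal β (Real.toNNReal (1/l)) x) * ENNReal.ofReal (γ l) :=
      fun x => ENNReal.ofReal_mul (gaussianPDFReal_nonneg _ _ _)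
    simp_rw [this]
    rw [lintegral_mul_const _ ((measurable_gaussianPDFReal _ _).ennreal_ofReal),
      gaussianReal_apply _ hv]
    rfl
  -- the inner lintegral in x over Ioi 0 in l: equals the Student density

  have key2 : ∀ x : ℝ,
      ∫⁻ l in Ioi (0:ℝ), ENNReal.ofReal (ψ l x) = ENNReal.ofReal (D x) := by
    intro x
    set b : ℝ := r + (x - β)^2/2 with hb_def
    have hb : 0 < b := by positivity
    set T : ℝ := 1 + (x - β)^2 / (ν * s^2) with hT_def
    have hT : 0 < T := by positivity
    set K : ℝ := r ^ a / (Real.Gamma a * Real.sqrt (2*π)) with hK_def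
    have hK : 0 ≤ K := by positivity
    have hb_eq : b = r * T := by
      rw [hb_def, hT_def, hr_def]
      field_simp
    have hcong : ∀ l ∈ Ioi (0:ℝ), ψ l x = K * (l ^ (p-1) * Real.exp (-(b*l))) := by
      intro l hl
      have hl' : (0:ℝ) < l := hl
      have h1l : ((Real.toNNReal (1/l)) : ℝ) = 1/l :=
        Real.coe_toNNReal (1/l) (by positivity)
      have hsqrt : (Real.sqrt (2*π*(1/l)))⁻¹ = (Real.sqrt (2*π))⁻¹ * l ^ (1/2:ℝ) := by
        rw [Real.sqrt_mul (by positivity : (0:ℝ) ≤ 2*π), one_div, Real.sqrt_inv, mul_inv,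
          inv_inv, Real.sqrt_eq_rpow (2*π), Real.sqrt_eq_rpow l]
      have harg : -(x - β)^2 / (2 * (1/l)) = -((x-β)^2/2) * l := by
        field_simp
      have hrpow : l ^ (1/2:ℝ) * l ^ (a-1) = l ^ (p-1) := by
        rw [← Real.rpow_add hl']
        congr 1
        rw [hp_def, ha_def]; ring
      have hexp : Real.exp (-((x-β)^2/2) * l) * Real.exp (-r*l) = Real.exp (-(b*l)) := by
        rw [← Real.exp_add]
        congr 1
        rw [hb_def]; ring
      simp only [hψ, hγ, gaussianPDFReal_def]
      rw [h1l, hsqrt, harg, hK_def, ← hrpow, ← hexp]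
      ring
    rw [setLIntegral_congr_fun measurableSet_Ioi
      (fun l hl => congrArg ENNReal.ofReal (hcong l hl))]
    have hInt : IntegrableOn (fun l : ℝ => K * (l ^ (p-1) * Real.exp (-(b*l)))) (Ioi (0:ℝ)) := by
      apply Integrable.const_mul
      have := integrableOn_rpow_mul_exp_neg_mul_rpow (s := p - 1) (p := 1)
        (by linarith) one_pos hb
      simpa [Real.rpow_one, neg_mul, IntegrableOn] using this
    have hnn : 0 ≤ᵐ[volume.restrict (Ioi (0:ℝ))]
        fun l : ℝ => K * (l ^ (p-1) * Real.exp (-(b*l))) := by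
      refine (ae_restrict_iff' measurableSet_Ioi).mpr (ae_of_all _ fun l hl => ?_)
      have hl' : (0:ℝ) < l := hl
      positivity
    rw [← ofReal_integral_eq_lintegral_ofReal hInt hnn]
    congr 1
    rw [integral_const_mul, integral_rpow_mul_exp_neg_mul_Ioi hp hb]
    -- algebra
    have hsp : (0:ℝ) < Real.sqrt (2*π) := Real.sqrt_pos.mpr (by positivity)
    have hsr : (0:ℝ) < Real.sqrt r := Real.sqrt_pos.mpr hr
    have h1 : (1/b : ℝ)^p = r^(-p) * T^(-p) := by
      rw [hb_eq, one_div, mul_inv, Real.mul_rpow (by positivity) (by positivity),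
        Real.inv_rpow hr.le, Real.inv_rpow hT.le, ← Real.rpow_neg hr.le, ← Real.rpow_neg hT.le]
    have h2 : r^a * r^(-p) * Real.sqrt r = 1 := by
      rw [Real.sqrt_eq_rpow, ← Real.rpow_add hr, ← Real.rpow_add hr]
      have he : a + -p + 1/(2:ℝ) = 0 := by rw [ha_def, hp_def]; ring
      rw [he, Real.rpow_zero]
    have h3 : Real.sqrt (2*π) * Real.sqrt r = Real.sqrt (π*ν) * s := by
      rw [← Real.sqrt_mul (by positivity) r]
      have he : 2*π*r = (π*ν)*s^2 := by rw [hr_def]; ring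
      rw [he, Real.sqrt_mul (by positivity) (s^2), Real.sqrt_sq hs.le]
    simp only [hD]
    rw [← hT_def, h1, hK_def]
    have h4 : Real.Gamma a * Real.sqrt (π*ν) * s = Real.Gamma a * (Real.sqrt (2*π) * Real.sqrt r) := by
      rw [h3]; ring
    rw [h4]
    have hsm : Real.sqrt (2*π) = Real.sqrt 2 * Real.sqrt π :=
      Real.sqrt_mul (by norm_num) π
    field_simp
    linear_combination h2
  -- assembly
  have keyfin : ∀ l ∈ Ioi (0:ℝ), (∫⁻ x in A, ENNReal.ofReal (ψ l x)) ≠ ⊤ := by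
    intro l hl
    rw [key1 l hl]
    exact ENNReal.mul_ne_top (measure_ne_top _ _) ENNReal.ofReal_ne_top
  calc
    ∫ l in Ioi (0:ℝ), ((gaussianReal β (Real.toNNReal (1 / l))) A).toReal *
        (r ^ a / Real.Gamma a * l ^ (a - 1) * Real.exp (-r * l))
        = ∫ l in Ioi (0:ℝ), (∫⁻ x in A, ENNReal.ofReal (ψ l x)).toReal := by
      refine setIntegral_congr_fun measurableSet_Ioi fun l hl => ?_
      rw [key1 l hl, ENNReal.toReal_mul, ENNReal.toReal_ofReal (hγ_nonneg l hl)]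
    _ = (∫⁻ l in Ioi (0:ℝ), ∫⁻ x in A, ENNReal.ofReal (ψ l x)).toReal := by
      rw [integral_eq_lintegral_of_nonneg_ae (ae_of_all _ fun l => ENNReal.toReal_nonneg)
        (Measurable.aestronglyMeasurable (Measurable.ennreal_toReal
          (Measurable.lintegral_prod_right' hψ_meas.ennreal_ofReal)))]
      congr 1
      refine setLIntegral_congr_fun measurableSet_Ioi (fun l hl => ?_)
      exact ENNReal.ofReal_toReal (keyfin l hl)
    _ = (∫⁻ x in A, ∫⁻ l in Ioi (0:ℝ), ENNReal.ofReal (ψ l x)).toReal := by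
      rw [lintegral_lintegral_swap hψ_meas.ennreal_ofReal.aemeasurable]
    _ = (∫⁻ x in A, ENNReal.ofReal (D x)).toReal := by
      congr 1
      exact setLIntegral_congr_fun hA (fun x _ => key2 x)
    _ = ∫ x in A, D x := by
      refine (integral_eq_lintegral_of_nonneg_ae (ae_of_all _ fun x => ?_) ?_).symm
      · exact mul_nonneg (by positivity) (Real.rpow_nonneg (by positivity) _)
      · apply Measurable.aestronglyMeasurable
        simp only [hD]
        fun_prop
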